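/- Let A be a finite-dimensional Hopf algebra over ℂ. For a ∈ A let π(a) ∈ End(A) be left multiplication by a, and for b ∈ A* let λ(b) ∈ End(A) be defined by λ(b)x = Σ b(S⁻¹(x₍₁₎))·x₍₂₎. Then the linear span of the operators {λ(b)∘π(a) : a ∈ A, b ∈ A*} is all of End(A); equivalently, it coincides with the linear span of the rank-one maps x ↦ b'(x)·a' with a' ∈ A, b' ∈ A*. -/

import Mathlib

/-!
STATEMENT 12: Let A be a finite-dimensional Hopf algebra over ℂ.  For a ∈ A let π(a) be
left multiplication by a and for b ∈ A* let λ(b)x = Σ b(S⁻¹(x₍₁₎))·x₍₂₎.  Then the linear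
span of the operators {λ(b)∘π(a) : a ∈ A, b ∈ A*} is all of End(A); equivalently, it
coincides with the linear span of the rank-one maps x ↦ b'(x)·a' with a' ∈ A, b' ∈ A*.
-/

open scoped TensorProduct

variable {A : Type*} [Ring A] [HopfAlgebra ℂ A]

/-- The convolution operator `λ(b) : A → A`, `λ(b)x = Σ b(S⁻¹(x₍₁₎))·x₍₂₎`, where
`Sinv` is the (given) inverse of the antipode. -/
noncomputable def lam (Sinv : A →ₗ[ℂ] A) (b : A →ₗ[ℂ] ℂ) : A →ₗ[ℂ] A :=
  (TensorProduct.lid ℂ A).toLinearMap ∘ₗ (b ∘ₗ Sinv).rTensor A ∘ₗ Coalgebra.comul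

open Coalgebra LinearMap

/-- The left convolution operator `L_c x = Σ c(x₍₁₎)·x₍₂₎` (no antipode inverse). -/
noncomputable def Lc (c : A →ₗ[ℂ] ℂ) : A →ₗ[ℂ] A :=
  (TensorProduct.lid ℂ A).toLinearMap ∘ₗ c.rTensor A ∘ₗ Coalgebra.comul

lemma Lc_apply (c : A →ₗ[ℂ] ℂ) (x : A) (r : Coalgebra.Repr ℂ x (A × A)) :
    Lc c x = ∑ i ∈ r.index, c (r.left i) • r.right i := by
  simp only [Lc, LinearMap.comp_apply]
  rw [← r.eq]
  simp [map_sum]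

lemma lam_comp_antipode (Sinv : A →ₗ[ℂ] A)
    (hS₁ : HopfAlgebra.antipode (R := ℂ) (A := A) ∘ₗ Sinv = LinearMap.id)
    (c : A →ₗ[ℂ] ℂ) :
    lam Sinv (c ∘ₗ HopfAlgebra.antipode (R := ℂ)) = Lc c := by
  unfold lam Lc
  have : (c ∘ₗ HopfAlgebra.antipode (R := ℂ)) ∘ₗ Sinv = c := by
    rw [LinearMap.comp_assoc, hS₁, LinearMap.comp_id]
  rw [this]

/-- The map `T(G)x = Σ G(x₍₁₎)·x₍₂₎`. -/
noncomputable def Tmap (G : A →ₗ[ℂ] A) : A →ₗ[ℂ] A :=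
  LinearMap.mul' ℂ A ∘ₗ G.rTensor A ∘ₗ Coalgebra.comul

lemma Tmap_apply (G : A →ₗ[ℂ] A) (x : A) (r : Coalgebra.Repr ℂ x (A × A)) :
    Tmap G x = ∑ i ∈ r.index, G (r.left i) * r.right i := by
  simp only [Tmap, LinearMap.comp_apply]
  rw [← r.eq]
  simp [map_sum]

lemma Tmap_sum {ι : Type*} (s : Finset ι) (G : ι → (A →ₗ[ℂ] A)) :
    Tmap (∑ i ∈ s, G i) = ∑ i ∈ s, Tmap (G i) := by
  ext x
  rw [Tmap_apply _ x (ℛ ℂ x)]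
  simp only [LinearMap.sum_apply, Tmap_apply _ x (ℛ ℂ x), Finset.sum_mul]
  exact Finset.sum_comm

lemma Tmap_smulRight (c : A →ₗ[ℂ] ℂ) (d : A) :
    Tmap (c.smulRight d) = LinearMap.mulLeft ℂ d ∘ₗ Lc c := by
  ext x
  rw [Tmap_apply _ x (ℛ ℂ x)]
  simp [Lc_apply c x (ℛ ℂ x), Finset.mul_sum, mul_smul_comm, smul_mul_assoc]

/-- Every endomorphism of a finite-dimensional space is a sum of rank-one maps. -/
lemma endo_sum [FiniteDimensional ℂ A] (f : A →ₗ[ℂ] A) :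
    f = ∑ i, ((Module.finBasis ℂ A).coord i).smulRight (f ((Module.finBasis ℂ A) i)) := by
  ext x
  simp only [LinearMap.sum_apply, LinearMap.smulRight_apply, Module.Basis.coord_apply]
  simp_rw [← map_smul, ← map_sum]
  rw [Module.Basis.sum_repr]

lemma sum_counit_smul {a : A} (r : Coalgebra.Repr ℂ a (A × A)) :
    ∑ i ∈ r.index, counit (R := ℂ) (r.left i) • r.right i = a := by
  have := congrArg (TensorProduct.lid ℂ A) (Coalgebra.sum_counit_tmul_eq r)
  simp only [map_sum, TensorProduct.lid_tmul, one_smul] at this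
  exact this

lemma sum_smul_counit {a : A} (r : Coalgebra.Repr ℂ a (A × A)) :
    ∑ i ∈ r.index, counit (R := ℂ) (r.right i) • r.left i = a := by
  have := congrArg (TensorProduct.rid ℂ A) (Coalgebra.sum_tmul_counit_eq r)
  simp only [map_sum, TensorProduct.rid_tmul, one_smul] at this
  exact this

/-- The key collapse identity: `Σ S(d₍₁₎)d₍₂₎ ⊗ d₍₃₎ = 1 ⊗ d`. -/
lemma antipode_collapse (d : A) :
    ∑ i ∈ (ℛ ℂ d).index, ∑ j ∈ (ℛ ℂ ((ℛ ℂ d).right i)).index,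
      (HopfAlgebra.antipode (R := ℂ) ((ℛ ℂ d).left i) * (ℛ ℂ ((ℛ ℂ d).right i)).left j)
        ⊗ₜ[ℂ] (ℛ ℂ ((ℛ ℂ d).right i)).right j = (1 : A) ⊗ₜ[ℂ] d := by
  set r := ℛ ℂ d with hr
  have H := Coalgebra.sum_tmul_tmul_eq r (fun i => ℛ ℂ (r.left i)) (fun i => ℛ ℂ (r.right i))
  set ψ : A ⊗[ℂ] (A ⊗[ℂ] A) →ₗ[ℂ] A ⊗[ℂ] A :=
    (LinearMap.mul' ℂ A).rTensor A ∘ₗ (TensorProduct.assoc ℂ A A A).symm.toLinearMap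
      ∘ₗ (HopfAlgebra.antipode (R := ℂ) (A := A)).rTensor (A ⊗[ℂ] A) with hψ
  have hψt : ∀ (p q w : A), ψ (p ⊗ₜ (q ⊗ₜ w)) =
      (HopfAlgebra.antipode (R := ℂ) p * q) ⊗ₜ[ℂ] w := by
    intro p q w
    simp [hψ, TensorProduct.assoc_symm_tmul]
  have H2 := congrArg ψ H
  simp only [map_sum, hψt] at H2
  rw [← H2]
  have : ∀ i ∈ r.index, ∑ j ∈ (ℛ ℂ (r.left i)).index,
      (HopfAlgebra.antipode (R := ℂ) ((ℛ ℂ (r.left i)).left j) * (ℛ ℂ (r.left i)).right j)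
        ⊗ₜ[ℂ] r.right i = (1 : A) ⊗ₜ[ℂ] (counit (R := ℂ) (r.left i) • r.right i) := by
    intro i _
    rw [← TensorProduct.sum_tmul, HopfAlgebra.sum_antipode_mul_eq_smul]
    rw [TensorProduct.smul_tmul]
  rw [Finset.sum_congr rfl this, ← TensorProduct.tmul_sum, _root_.sum_counit_smul r]

lemma Lc_mul_apply (c : A →ₗ[ℂ] ℂ) (v x : A) (r1 : Coalgebra.Repr ℂ v (A × A))
    (r2 : Coalgebra.Repr ℂ x (A × A)) :
    Lc c (v * x) = ∑ j ∈ r1.index, ∑ k ∈ r2.index,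
      c (r1.left j * r2.left k) • (r1.right j * r2.right k) := by
  simp only [Lc, LinearMap.comp_apply]
  rw [Bialgebra.comul_mul, ← r1.eq, ← r2.eq, Finset.sum_mul_sum]
  simp [map_sum, Algebra.TensorProduct.tmul_mul_tmul]

/-- Straightening: `π(d) ∘ L_c = Σ L_{c(S(d₍₁₎)·)} ∘ π(d₍₂₎)`. -/
lemma mulLeft_comp_Lc (c : A →ₗ[ℂ] ℂ) (d : A) :
    LinearMap.mulLeft ℂ d ∘ₗ Lc c =
      ∑ i ∈ (ℛ ℂ d).index,
        Lc (c ∘ₗ LinearMap.mulLeft ℂ (HopfAlgebra.antipode (R := ℂ) ((ℛ ℂ d).left i)))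
          ∘ₗ LinearMap.mulLeft ℂ ((ℛ ℂ d).right i) := by
  ext x
  set rx := ℛ ℂ x with hrx
  simp only [LinearMap.sum_apply, LinearMap.comp_apply, LinearMap.mulLeft_apply]
  rw [Lc_apply c x rx, Finset.mul_sum]
  have hterm : ∀ i ∈ (ℛ ℂ d).index,
      Lc (c ∘ₗ LinearMap.mulLeft ℂ (HopfAlgebra.antipode (R := ℂ) ((ℛ ℂ d).left i)))
          ((ℛ ℂ d).right i * x)
        = ∑ k ∈ rx.index, ∑ j ∈ (ℛ ℂ ((ℛ ℂ d).right i)).index,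
            c (HopfAlgebra.antipode (R := ℂ) ((ℛ ℂ d).left i)
                * ((ℛ ℂ ((ℛ ℂ d).right i)).left j * rx.left k))
              • ((ℛ ℂ ((ℛ ℂ d).right i)).right j * rx.right k) := by
    intro i _
    rw [Lc_mul_apply _ _ _ (ℛ ℂ ((ℛ ℂ d).right i)) rx]
    simp only [LinearMap.comp_apply, LinearMap.mulLeft_apply]
    exact Finset.sum_comm
  rw [Finset.sum_congr rfl hterm, Finset.sum_comm]
  refine Finset.sum_congr rfl fun k hk => ?_
  set φ : A ⊗[ℂ] A →ₗ[ℂ] A :=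
    (TensorProduct.lid ℂ A).toLinearMap
      ∘ₗ (c ∘ₗ LinearMap.mulRight ℂ (rx.left k)).rTensor A
      ∘ₗ (LinearMap.mulRight ℂ (rx.right k)).lTensor A with hφ
  have hφt : ∀ (p q : A), φ (p ⊗ₜ q) = c (p * rx.left k) • (q * rx.right k) := by
    intro p q
    simp [hφ]
  have H3 := congrArg φ (antipode_collapse d)
  simp only [map_sum, hφt, one_mul] at H3
  rw [mul_smul_comm, ← H3]
  exact Finset.sum_congr rfl fun i _ => Finset.sum_congr rfl fun j _ => by rw [mul_assoc]

/-- Rank-one maps arise as `T(G)` for `G = π(a') ∘ S ∘ L_{b'}`. -/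
lemma Tmap_rankone (a' : A) (b' : A →ₗ[ℂ] ℂ) :
    Tmap (LinearMap.mulLeft ℂ a' ∘ₗ HopfAlgebra.antipode (R := ℂ) ∘ₗ Lc b') =
      b'.smulRight a' := by
  ext x
  set rx := ℛ ℂ x with hrx
  have H := Coalgebra.sum_tmul_tmul_eq rx (fun i => ℛ ℂ (rx.left i)) (fun i => ℛ ℂ (rx.right i))
  set ν : A ⊗[ℂ] A →ₗ[ℂ] A :=
    LinearMap.mulLeft ℂ a' ∘ₗ LinearMap.mul' ℂ A
      ∘ₗ (HopfAlgebra.antipode (R := ℂ) (A := A)).rTensor A with hν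
  set χ : A ⊗[ℂ] (A ⊗[ℂ] A) →ₗ[ℂ] A :=
    (TensorProduct.lid ℂ A).toLinearMap ∘ₗ b'.rTensor A ∘ₗ ν.lTensor A with hχ
  have hχt : ∀ (p q w : A), χ (p ⊗ₜ (q ⊗ₜ w)) =
      b' p • (a' * (HopfAlgebra.antipode (R := ℂ) q * w)) := by
    intro p q w
    simp [hχ, hν]
  have H2 := congrArg χ H
  simp only [map_sum, hχt] at H2
  rw [Tmap_apply _ x rx]
  have lhs_eq : ∑ i ∈ rx.index,
      (LinearMap.mulLeft ℂ a' ∘ₗ HopfAlgebra.antipode (R := ℂ) ∘ₗ Lc b') (rx.left i)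
        * rx.right i
      = ∑ i ∈ rx.index, ∑ j ∈ (ℛ ℂ (rx.left i)).index,
          b' ((ℛ ℂ (rx.left i)).left j) •
            (a' * (HopfAlgebra.antipode (R := ℂ) ((ℛ ℂ (rx.left i)).right j) * rx.right i)) := by
    refine Finset.sum_congr rfl fun i _ => ?_
    rw [LinearMap.comp_apply, LinearMap.comp_apply, Lc_apply b' _ (ℛ ℂ (rx.left i))]
    simp [map_sum, Finset.mul_sum, Finset.sum_mul, mul_smul_comm, smul_mul_assoc, mul_assoc]
  rw [lhs_eq, H2]
  have rhs_eq : ∀ i ∈ rx.index, ∑ j ∈ (ℛ ℂ (rx.right i)).index,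
      b' (rx.left i) •
        (a' * (HopfAlgebra.antipode (R := ℂ) ((ℛ ℂ (rx.right i)).left j)
          * (ℛ ℂ (rx.right i)).right j))
      = (counit (R := ℂ) (rx.right i) • b' (rx.left i)) • a' := by
    intro i _
    rw [← Finset.smul_sum, ← Finset.mul_sum, HopfAlgebra.sum_antipode_mul_eq_smul]
    simp [smul_smul, mul_comm]
  rw [Finset.sum_congr rfl rhs_eq]
  simp_rw [← Finset.sum_smul, ← map_smul, ← map_sum, sum_smul_counit rx]
  simp

theorem span_lam_comp_mulLeft_eq_top
    [FiniteDimensional ℂ A]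
    (Sinv : A →ₗ[ℂ] A)
    (hS₁ : HopfAlgebra.antipode (R := ℂ) (A := A) ∘ₗ Sinv = LinearMap.id)
    (hS₂ : Sinv ∘ₗ HopfAlgebra.antipode (R := ℂ) (A := A) = LinearMap.id) :
    Submodule.span ℂ
        {f : A →ₗ[ℂ] A | ∃ (a : A) (b : A →ₗ[ℂ] ℂ),
          f = lam Sinv b ∘ₗ LinearMap.mulLeft ℂ a} = ⊤ ∧
    Submodule.span ℂ
        {f : A →ₗ[ℂ] A | ∃ (a : A) (b : A →ₗ[ℂ] ℂ),
          f = lam Sinv b ∘ₗ LinearMap.mulLeft ℂ a} =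
      Submodule.span ℂ
        {f : A →ₗ[ℂ] A | ∃ (a' : A) (b' : A →ₗ[ℂ] ℂ), f = b'.smulRight a'} := by
  set gen : Set (A →ₗ[ℂ] A) :=
    {f : A →ₗ[ℂ] A | ∃ (a : A) (b : A →ₗ[ℂ] ℂ),
      f = lam Sinv b ∘ₗ LinearMap.mulLeft ℂ a} with hgen
  set rk : Set (A →ₗ[ℂ] A) :=
    {f : A →ₗ[ℂ] A | ∃ (a' : A) (b' : A →ₗ[ℂ] ℂ), f = b'.smulRight a'} with hrk
  have hmem : ∀ (c : A →ₗ[ℂ] ℂ) (v : A), Lc c ∘ₗ LinearMap.mulLeft ℂ v ∈ gen := fun c v =>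
    ⟨v, c ∘ₗ HopfAlgebra.antipode (R := ℂ), by rw [lam_comp_antipode Sinv hS₁ c]⟩
  have hLc : ∀ (c : A →ₗ[ℂ] ℂ) (d : A),
      LinearMap.mulLeft ℂ d ∘ₗ Lc c ∈ Submodule.span ℂ gen := fun c d => by
    rw [mulLeft_comp_Lc c d]
    exact Submodule.sum_mem _ fun i _ => Submodule.subset_span (hmem _ _)
  have hrank : ∀ (a' : A) (b' : A →ₗ[ℂ] ℂ),
      b'.smulRight a' ∈ Submodule.span ℂ gen := fun a' b' => by
    rw [← Tmap_rankone a' b']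
    set G := LinearMap.mulLeft ℂ a' ∘ₗ HopfAlgebra.antipode (R := ℂ) ∘ₗ Lc b' with hG
    have hT : Tmap G = ∑ i, Tmap (((Module.finBasis ℂ A).coord i).smulRight
        (G ((Module.finBasis ℂ A) i))) := by
      conv_lhs => rw [endo_sum G]
      rw [Tmap_sum]
    rw [hT]
    refine Submodule.sum_mem _ fun i _ => ?_
    rw [Tmap_smulRight]
    exact hLc _ _
  have htop : Submodule.span ℂ rk = ⊤ := by
    rw [eq_top_iff]
    rintro f -
    rw [endo_sum f]
    exact Submodule.sum_mem _ fun i _ =>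
      Submodule.subset_span ⟨f ((Module.finBasis ℂ A) i), (Module.finBasis ℂ A).coord i, rfl⟩
  have h1 : Submodule.span ℂ gen = ⊤ := by
    rw [eq_top_iff, ← htop]
    refine Submodule.span_le.mpr ?_
    rintro f ⟨a', b', rfl⟩
    exact hrank a' b'
  exact ⟨h1, by rw [h1, htop]⟩
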